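/- arXiv:math/0007169 — 8 statements merged into one kernel-verified Lean document; each statement's English description precedes it below -/
import Mathlib

section
/- Let c be a rational number such that 2c is a positive integer and c ≠ 1/2, and let d be a positive integer. Then 2·(c²−55c+748)·d = (70c²+955c+2388)·c holds if and only if (c,d) is one of the following twenty pairs: (8,156), (16,2296), (20,10310), (43/2,21414), (22,28639), (47/2,96256), (24,196884), (49/2,1107449), (61/2,1964871), (63/2,207144), (32,139504), (34,57889), (36,35856), (40,20620), (44,14994), (109/2,9919), (68,8146), (187/2,7566), (132,8154), (1496,54836). -/
private def ftab (N : ℕ) : Bool :=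
  N < 2 || N*N + 2992 < 110*N ||
  (N*(35*N*N+955*N+4776)) % (2*(N*N+2992-110*N)) != 0 ||
  (N == 16 || N == 32 || N == 40 || N == 43 || N == 44 || N == 47 || N == 48 || N == 49 || N == 61 || N == 63 || N == 64 || N == 68 || N == 72 || N == 80 || N == 88 || N == 109 || N == 136 || N == 187 || N == 264 || N == 2992)

private def chk : ℕ → ℕ → ℕ → Bool
  | 0, a, k => k == 0 || (k == 1 && ftab a)
  | fuel+1, a, k => k == 0 || (k == 1 && ftab a) ||
      (chk fuel a (k/2) && chk fuel (a + k/2) (k - k/2))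

private lemma chk_sound : ∀ fuel a k, chk fuel a k = true → ∀ i, i < k → ftab (a+i) = true := by
  intro fuel
  induction fuel with
  | zero =>
    intro a k h i hi
    simp only [chk, Bool.or_eq_true, Bool.and_eq_true, beq_iff_eq] at h
    rcases h with h | ⟨h1, h2⟩
    · omega
    · have : i = 0 := by omega
      simpa [this] using h2
  | succ fuel ih =>
    intro a k h i hi
    simp only [chk, Bool.or_eq_true, Bool.and_eq_true, beq_iff_eq] at h
    rcases h with (h | ⟨h1, h2⟩) | ⟨h1, h2⟩
    · omega
    · have : i = 0 := by omega
      simpa [this] using h2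
    · rcases lt_or_ge i (k/2) with h' | h'
      · exact ih a (k/2) h1 i h'
      · have := ih (a + k/2) (k - k/2) h2 (i - k/2) (by omega)
        have e : a + k/2 + (i - k/2) = a + i := by omega
        rwa [e] at this

set_option maxHeartbeats 4000000 in
private lemma chk_true : chk 18 0 3000 = true := by decide

private lemma key (N : ℕ) (h2 : 2 ≤ N) (hN : N < 3000) (hle : 110*N < N*N+2992)
    (hdvd : (2*(N*N+2992-110*N)) ∣ (N*(35*N*N+955*N+4776))) :
    N = 16 ∨ N = 32 ∨ N = 40 ∨ N = 43 ∨ N = 44 ∨ N = 47 ∨ N = 48 ∨ N = 49 ∨ N = 61 ∨ N = 63 ∨ N = 64 ∨ N = 68 ∨ N = 72 ∨ N = 80 ∨ N = 88 ∨ N = 109 ∨ N = 136 ∨ N = 187 ∨ N = 264 ∨ N = 2992 := by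
  have hf := chk_sound 18 0 3000 chk_true N hN
  simp only [Nat.zero_add, ftab, Bool.or_eq_true, Bool.and_eq_true, beq_iff_eq,
    decide_eq_true_eq, bne_iff_ne, ne_eq, not_not] at hf
  have hmod : (N*(35*N*N+955*N+4776)) % (2*(N*N+2992-110*N)) = 0 :=
    Nat.mod_eq_zero_of_dvd hdvd
  rcases hf with ((h | h) | h) | h
  · omega
  · omega
  · exact absurd hmod h
  · tauto

private lemma noquad (j M : ℕ) [NeZero M]
    (hall : ∀ x : ZMod M, (x^2 - 110*x + 2992) * (j : ZMod M) ≠ 428606*x - 14376560)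
    (n : ℤ) (h : (n^2 - 110*n + 2992) * (j : ℤ) = 428606*n - 14376560) : False := by
  apply hall ((n : ℤ) : ZMod M)
  have := congrArg (fun z : ℤ => (z : ZMod M)) h
  push_cast at this
  exact this

set_option maxHeartbeats 4000000 in
/-- Table 3.1: pairs `(c, d)` with `c` a positive half-integer, `c ≠ 1/2`, `d` a
positive integer, satisfying `2(c² - 55c + 748)d = (70c² + 955c + 2388)c`. -/
theorem table_3_1 (c : ℚ) (d : ℕ)
    (hc : ∃ n : ℤ, 0 < n ∧ 2 * c = n) (hc' : c ≠ 1/2) (hd : 0 < d) :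
    2 * (c^2 - 55*c + 748) * (d : ℚ) = (70*c^2 + 955*c + 2388) * c ↔
      (c = 8 ∧ d = 156) ∨ (c = 16 ∧ d = 2296) ∨ (c = 20 ∧ d = 10310) ∨
      (c = 43/2 ∧ d = 21414) ∨ (c = 22 ∧ d = 28639) ∨ (c = 47/2 ∧ d = 96256) ∨
      (c = 24 ∧ d = 196884) ∨ (c = 49/2 ∧ d = 1107449) ∨ (c = 61/2 ∧ d = 1964871) ∨
      (c = 63/2 ∧ d = 207144) ∨ (c = 32 ∧ d = 139504) ∨ (c = 34 ∧ d = 57889) ∨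
      (c = 36 ∧ d = 35856) ∨ (c = 40 ∧ d = 20620) ∨ (c = 44 ∧ d = 14994) ∨
      (c = 109/2 ∧ d = 9919) ∨ (c = 68 ∧ d = 8146) ∨ (c = 187/2 ∧ d = 7566) ∨
      (c = 132 ∧ d = 8154) ∨ (c = 1496 ∧ d = 54836) := by
  obtain ⟨n, hn0, hn⟩ := hc
  lift n to ℕ using hn0.le with m
  have hm0 : 0 < m := by exact_mod_cast hn0
  constructor
  · intro heq
    have hn' : (m : ℚ) = 2 * c := by exact_mod_cast hn.symm
    have hEQ : 2*((m:ℚ)^2 - 110*m + 2992) * (d:ℚ) = m*(35*(m:ℚ)^2+955*m+4776) := by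
      rw [hn']
      linear_combination 4*heq
    have hE : 2*((m:ℤ)^2 - 110*m + 2992) * (d:ℤ) = (m:ℤ)*(35*(m:ℤ)^2+955*m+4776) := by
      exact_mod_cast hEQ
    have hm2 : 2 ≤ m := by
      by_contra h
      push_neg at h
      have hm1 : m = 1 := by omega
      subst hm1
      exact hc' (by push_cast at hn'; linarith)
    have hmz : (2:ℤ) ≤ (m:ℤ) := by exact_mod_cast hm2
    have hdz : (1:ℤ) ≤ (d:ℤ) := by exact_mod_cast hd
    have hq : 0 < (m:ℤ)^2 - 110*(m:ℤ) + 2992 := by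
      by_contra h
      push_neg at h
      nlinarith [hE, hmz, hdz]
    have hlt : m < 3000 := by
      by_contra h
      push_neg at h
      have hmz3 : (3000:ℤ) ≤ (m:ℤ) := by exact_mod_cast h
      obtain ⟨t, ht0⟩ : ∃ t : ℤ, t = 2*(d:ℤ) - 35*(m:ℤ) - 4805 := ⟨_, rfl⟩
      have ht : ((m:ℤ)^2 - 110*(m:ℤ) + 2992) * t = 428606*(m:ℤ) - 14376560 := by
        rw [ht0]; linear_combination hE
      have hr1 : (0:ℤ) < 428606*(m:ℤ) - 14376560 := by linarith
      have hr2 : 428606*(m:ℤ) - 14376560 < 147*((m:ℤ)^2 - 110*(m:ℤ) + 2992) := by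
        nlinarith [mul_pos (by linarith : (0:ℤ) < (m:ℤ) - 2992)
          (by linarith : (0:ℤ) < 147*(m:ℤ) - 4952)]
      have h1 : 1 ≤ t := by
        by_contra h'
        push_neg at h'
        have : ((m:ℤ)^2 - 110*(m:ℤ) + 2992) * t ≤ 0 :=
          mul_nonpos_of_nonneg_of_nonpos hq.le (by omega)
        linarith
      have h2 : t ≤ 146 := by
        by_contra h'
        push_neg at h'
        have : ((m:ℤ)^2 - 110*(m:ℤ) + 2992) * 147 ≤ ((m:ℤ)^2 - 110*(m:ℤ) + 2992) * t :=
          mul_le_mul_of_nonneg_left (by omega) hq.le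
        nlinarith
      clear ht0 hE hEQ hn' hn heq
      interval_cases t
      · exact noquad 1 5 (by decide) (m:ℤ) ht
      · exact noquad 2 13 (by decide) (m:ℤ) ht
      · exact noquad 3 7 (by decide) (m:ℤ) ht
      · exact noquad 4 5 (by decide) (m:ℤ) ht
      · exact noquad 5 7 (by decide) (m:ℤ) ht
      · exact noquad 6 5 (by decide) (m:ℤ) ht
      · exact noquad 7 13 (by decide) (m:ℤ) ht
      · exact noquad 8 13 (by decide) (m:ℤ) ht
      · exact noquad 9 5 (by decide) (m:ℤ) ht
      · exact noquad 10 7 (by decide) (m:ℤ) ht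
      · exact noquad 11 5 (by decide) (m:ℤ) ht
      · exact noquad 12 7 (by decide) (m:ℤ) ht
      · exact noquad 13 43 (by decide) (m:ℤ) ht
      · exact noquad 14 5 (by decide) (m:ℤ) ht
      · exact noquad 15 13 (by decide) (m:ℤ) ht
      · exact noquad 16 5 (by decide) (m:ℤ) ht
      · exact noquad 17 7 (by decide) (m:ℤ) ht
      · exact noquad 18 19 (by decide) (m:ℤ) ht
      · exact noquad 19 5 (by decide) (m:ℤ) ht
      · exact noquad 20 13 (by decide) (m:ℤ) ht
      · exact noquad 21 5 (by decide) (m:ℤ) ht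
      · exact noquad 22 13 (by decide) (m:ℤ) ht
      · exact noquad 23 13 (by decide) (m:ℤ) ht
      · exact noquad 24 5 (by decide) (m:ℤ) ht
      · exact noquad 25 29 (by decide) (m:ℤ) ht
      · exact noquad 26 5 (by decide) (m:ℤ) ht
      · exact noquad 27 23 (by decide) (m:ℤ) ht
      · exact noquad 28 13 (by decide) (m:ℤ) ht
      · exact noquad 29 5 (by decide) (m:ℤ) ht
      · exact noquad 30 19 (by decide) (m:ℤ) ht
      · exact noquad 31 5 (by decide) (m:ℤ) ht
      · exact noquad 32 29 (by decide) (m:ℤ) ht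
      · exact noquad 33 7 (by decide) (m:ℤ) ht
      · exact noquad 34 5 (by decide) (m:ℤ) ht
      · exact noquad 35 13 (by decide) (m:ℤ) ht
      · exact noquad 36 5 (by decide) (m:ℤ) ht
      · exact noquad 37 19 (by decide) (m:ℤ) ht
      · exact noquad 38 7 (by decide) (m:ℤ) ht
      · exact noquad 39 5 (by decide) (m:ℤ) ht
      · exact noquad 40 7 (by decide) (m:ℤ) ht
      · exact noquad 41 5 (by decide) (m:ℤ) ht
      · exact noquad 42 19 (by decide) (m:ℤ) ht
      · exact noquad 43 23 (by decide) (m:ℤ) ht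
      · exact noquad 44 5 (by decide) (m:ℤ) ht
      · exact noquad 45 7 (by decide) (m:ℤ) ht
      · exact noquad 46 5 (by decide) (m:ℤ) ht
      · exact noquad 47 7 (by decide) (m:ℤ) ht
      · exact noquad 48 13 (by decide) (m:ℤ) ht
      · exact noquad 49 5 (by decide) (m:ℤ) ht
      · exact noquad 50 19 (by decide) (m:ℤ) ht
      · exact noquad 51 5 (by decide) (m:ℤ) ht
      · exact noquad 52 7 (by decide) (m:ℤ) ht
      · exact noquad 53 41 (by decide) (m:ℤ) ht
      · exact noquad 54 5 (by decide) (m:ℤ) ht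
      · exact noquad 55 19 (by decide) (m:ℤ) ht
      · exact noquad 56 5 (by decide) (m:ℤ) ht
      · exact noquad 57 41 (by decide) (m:ℤ) ht
      · exact noquad 58 23 (by decide) (m:ℤ) ht
      · exact noquad 59 5 (by decide) (m:ℤ) ht
      · exact noquad 60 13 (by decide) (m:ℤ) ht
      · exact noquad 61 5 (by decide) (m:ℤ) ht
      · exact noquad 62 13 (by decide) (m:ℤ) ht
      · exact noquad 63 41 (by decide) (m:ℤ) ht
      · exact noquad 64 5 (by decide) (m:ℤ) ht
      · exact noquad 65 23 (by decide) (m:ℤ) ht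
      · exact noquad 66 5 (by decide) (m:ℤ) ht
      · exact noquad 67 13 (by decide) (m:ℤ) ht
      · exact noquad 68 7 (by decide) (m:ℤ) ht
      · exact noquad 69 5 (by decide) (m:ℤ) ht
      · exact noquad 70 41 (by decide) (m:ℤ) ht
      · exact noquad 71 5 (by decide) (m:ℤ) ht
      · exact noquad 72 13 (by decide) (m:ℤ) ht
      · exact noquad 73 7 (by decide) (m:ℤ) ht
      · exact noquad 74 5 (by decide) (m:ℤ) ht
      · exact noquad 75 7 (by decide) (m:ℤ) ht
      · exact noquad 76 5 (by decide) (m:ℤ) ht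
      · exact noquad 77 23 (by decide) (m:ℤ) ht
      · exact noquad 78 41 (by decide) (m:ℤ) ht
      · exact noquad 79 5 (by decide) (m:ℤ) ht
      · exact noquad 80 7 (by decide) (m:ℤ) ht
      · exact noquad 81 5 (by decide) (m:ℤ) ht
      · exact noquad 82 7 (by decide) (m:ℤ) ht
      · exact noquad 83 29 (by decide) (m:ℤ) ht
      · exact noquad 84 5 (by decide) (m:ℤ) ht
      · exact noquad 85 13 (by decide) (m:ℤ) ht
      · exact noquad 86 5 (by decide) (m:ℤ) ht
      · exact noquad 87 7 (by decide) (m:ℤ) ht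
      · exact noquad 88 13 (by decide) (m:ℤ) ht
      · exact noquad 89 5 (by decide) (m:ℤ) ht
      · exact noquad 90 23 (by decide) (m:ℤ) ht
      · exact noquad 91 5 (by decide) (m:ℤ) ht
      · exact noquad 92 43 (by decide) (m:ℤ) ht
      · exact noquad 93 13 (by decide) (m:ℤ) ht
      · exact noquad 94 5 (by decide) (m:ℤ) ht
      · exact noquad 95 23 (by decide) (m:ℤ) ht
      · exact noquad 96 5 (by decide) (m:ℤ) ht
      · exact noquad 97 23 (by decide) (m:ℤ) ht
      · exact noquad 98 13 (by decide) (m:ℤ) ht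
      · exact noquad 99 5 (by decide) (m:ℤ) ht
      · exact noquad 100 13 (by decide) (m:ℤ) ht
      · exact noquad 101 5 (by decide) (m:ℤ) ht
      · exact noquad 102 29 (by decide) (m:ℤ) ht
      · exact noquad 103 7 (by decide) (m:ℤ) ht
      · exact noquad 104 5 (by decide) (m:ℤ) ht
      · exact noquad 105 19 (by decide) (m:ℤ) ht
      · exact noquad 106 5 (by decide) (m:ℤ) ht
      · exact noquad 107 19 (by decide) (m:ℤ) ht
      · exact noquad 108 7 (by decide) (m:ℤ) ht
      · exact noquad 109 5 (by decide) (m:ℤ) ht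
      · exact noquad 110 7 (by decide) (m:ℤ) ht
      · exact noquad 111 5 (by decide) (m:ℤ) ht
      · exact noquad 112 13 (by decide) (m:ℤ) ht
      · exact noquad 113 13 (by decide) (m:ℤ) ht
      · exact noquad 114 5 (by decide) (m:ℤ) ht
      · exact noquad 115 7 (by decide) (m:ℤ) ht
      · exact noquad 116 5 (by decide) (m:ℤ) ht
      · exact noquad 117 7 (by decide) (m:ℤ) ht
      · exact noquad 118 19 (by decide) (m:ℤ) ht
      · exact noquad 119 5 (by decide) (m:ℤ) ht
      · exact noquad 120 23 (by decide) (m:ℤ) ht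
      · exact noquad 121 5 (by decide) (m:ℤ) ht
      · exact noquad 122 7 (by decide) (m:ℤ) ht
      · exact noquad 123 19 (by decide) (m:ℤ) ht
      · exact noquad 124 5 (by decide) (m:ℤ) ht
      · exact noquad 125 13 (by decide) (m:ℤ) ht
      · exact noquad 126 5 (by decide) (m:ℤ) ht
      · exact noquad 127 13 (by decide) (m:ℤ) ht
      · exact noquad 128 41 (by decide) (m:ℤ) ht
      · exact noquad 129 5 (by decide) (m:ℤ) ht
      · exact noquad 130 29 (by decide) (m:ℤ) ht
      · exact noquad 131 5 (by decide) (m:ℤ) ht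
      · exact noquad 132 13 (by decide) (m:ℤ) ht
      · exact noquad 133 23 (by decide) (m:ℤ) ht
      · exact noquad 134 5 (by decide) (m:ℤ) ht
      · exact noquad 135 23 (by decide) (m:ℤ) ht
      · exact noquad 136 5 (by decide) (m:ℤ) ht
      · exact noquad 137 13 (by decide) (m:ℤ) ht
      · exact noquad 138 7 (by decide) (m:ℤ) ht
      · exact noquad 139 5 (by decide) (m:ℤ) ht
      · exact noquad 140 13 (by decide) (m:ℤ) ht
      · exact noquad 141 5 (by decide) (m:ℤ) ht
      · exact noquad 142 19 (by decide) (m:ℤ) ht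
      · exact noquad 143 7 (by decide) (m:ℤ) ht
      · exact noquad 144 5 (by decide) (m:ℤ) ht
      · exact noquad 145 7 (by decide) (m:ℤ) ht
      · exact noquad 146 5 (by decide) (m:ℤ) ht
    have hle : 110*m < m*m + 2992 := by
      have : (110*(m:ℤ)) < (m:ℤ)*(m:ℤ) + 2992 := by nlinarith [hq]
      exact_mod_cast this
    have hdvd : (2*(m*m+2992-110*m)) ∣ (m*(35*m*m+955*m+4776)) := by
      refine ⟨d, ?_⟩
      zify [hle.le]
      linear_combination -hE
    have hmem := key m hm2 hlt hle hdvd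
    rcases hmem with rfl|rfl|rfl|rfl|rfl|rfl|rfl|rfl|rfl|rfl|rfl|rfl|rfl|rfl|rfl|rfl|rfl|rfl|rfl|rfl
    · norm_num at hE
      exact Or.inl ⟨by push_cast at hn; linarith, by omega⟩
    · norm_num at hE
      exact Or.inr (Or.inl ⟨by push_cast at hn; linarith, by omega⟩)
    · norm_num at hE
      exact Or.inr (Or.inr (Or.inl ⟨by push_cast at hn; linarith, by omega⟩))
    · norm_num at hE
      exact Or.inr (Or.inr (Or.inr (Or.inl ⟨by push_cast at hn; linarith, by omega⟩)))
    · norm_num at hE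
      exact Or.inr (Or.inr (Or.inr (Or.inr (Or.inl ⟨by push_cast at hn; linarith, by omega⟩))))
    · norm_num at hE
      exact Or.inr (Or.inr (Or.inr (Or.inr (Or.inr (Or.inl ⟨by push_cast at hn; linarith, by omega⟩)))))
    · norm_num at hE
      exact Or.inr (Or.inr (Or.inr (Or.inr (Or.inr (Or.inr (Or.inl ⟨by push_cast at hn; linarith, by omega⟩))))))
    · norm_num at hE
      exact Or.inr (Or.inr (Or.inr (Or.inr (Or.inr (Or.inr (Or.inr (Or.inl ⟨by push_cast at hn; linarith, by omega⟩)))))))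
    · norm_num at hE
      exact Or.inr (Or.inr (Or.inr (Or.inr (Or.inr (Or.inr (Or.inr (Or.inr (Or.inl ⟨by push_cast at hn; linarith, by omega⟩))))))))
    · norm_num at hE
      exact Or.inr (Or.inr (Or.inr (Or.inr (Or.inr (Or.inr (Or.inr (Or.inr (Or.inr (Or.inl ⟨by push_cast at hn; linarith, by omega⟩)))))))))
    · norm_num at hE
      exact Or.inr (Or.inr (Or.inr (Or.inr (Or.inr (Or.inr (Or.inr (Or.inr (Or.inr (Or.inr (Or.inl ⟨by push_cast at hn; linarith, by omega⟩))))))))))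
    · norm_num at hE
      exact Or.inr (Or.inr (Or.inr (Or.inr (Or.inr (Or.inr (Or.inr (Or.inr (Or.inr (Or.inr (Or.inr (Or.inl ⟨by push_cast at hn; linarith, by omega⟩)))))))))))
    · norm_num at hE
      exact Or.inr (Or.inr (Or.inr (Or.inr (Or.inr (Or.inr (Or.inr (Or.inr (Or.inr (Or.inr (Or.inr (Or.inr (Or.inl ⟨by push_cast at hn; linarith, by omega⟩))))))))))))
    · norm_num at hE
      exact Or.inr (Or.inr (Or.inr (Or.inr (Or.inr (Or.inr (Or.inr (Or.inr (Or.inr (Or.inr (Or.inr (Or.inr (Or.inr (Or.inl ⟨by push_cast at hn; linarith, by omega⟩)))))))))))))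
    · norm_num at hE
      exact Or.inr (Or.inr (Or.inr (Or.inr (Or.inr (Or.inr (Or.inr (Or.inr (Or.inr (Or.inr (Or.inr (Or.inr (Or.inr (Or.inr (Or.inl ⟨by push_cast at hn; linarith, by omega⟩))))))))))))))
    · norm_num at hE
      exact Or.inr (Or.inr (Or.inr (Or.inr (Or.inr (Or.inr (Or.inr (Or.inr (Or.inr (Or.inr (Or.inr (Or.inr (Or.inr (Or.inr (Or.inr (Or.inl ⟨by push_cast at hn; linarith, by omega⟩)))))))))))))))
    · norm_num at hE
      exact Or.inr (Or.inr (Or.inr (Or.inr (Or.inr (Or.inr (Or.inr (Or.inr (Or.inr (Or.inr (Or.inr (Or.inr (Or.inr (Or.inr (Or.inr (Or.inr (Or.inl ⟨by push_cast at hn; linarith, by omega⟩))))))))))))))))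
    · norm_num at hE
      exact Or.inr (Or.inr (Or.inr (Or.inr (Or.inr (Or.inr (Or.inr (Or.inr (Or.inr (Or.inr (Or.inr (Or.inr (Or.inr (Or.inr (Or.inr (Or.inr (Or.inr (Or.inl ⟨by push_cast at hn; linarith, by omega⟩)))))))))))))))))
    · norm_num at hE
      exact Or.inr (Or.inr (Or.inr (Or.inr (Or.inr (Or.inr (Or.inr (Or.inr (Or.inr (Or.inr (Or.inr (Or.inr (Or.inr (Or.inr (Or.inr (Or.inr (Or.inr (Or.inr (Or.inl ⟨by push_cast at hn; linarith, by omega⟩))))))))))))))))))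
    · norm_num at hE
      exact Or.inr (Or.inr (Or.inr (Or.inr (Or.inr (Or.inr (Or.inr (Or.inr (Or.inr (Or.inr (Or.inr (Or.inr (Or.inr (Or.inr (Or.inr (Or.inr (Or.inr (Or.inr (Or.inr (⟨by push_cast at hn; linarith, by omega⟩)))))))))))))))))))
  · rintro (⟨rfl,rfl⟩|⟨rfl,rfl⟩|⟨rfl,rfl⟩|⟨rfl,rfl⟩|⟨rfl,rfl⟩|⟨rfl,rfl⟩|⟨rfl,rfl⟩|⟨rfl,rfl⟩|⟨rfl,rfl⟩|⟨rfl,rfl⟩|⟨rfl,rfl⟩|⟨rfl,rfl⟩|⟨rfl,rfl⟩|⟨rfl,rfl⟩|⟨rfl,rfl⟩|⟨rfl,rfl⟩|⟨rfl,rfl⟩|⟨rfl,rfl⟩|⟨rfl,rfl⟩|⟨rfl,rfl⟩) <;> norm_num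
end

section
/- Let c be a rational number such that 2c is a positive integer and let d be a positive integer. Then the two conditions (22−2c)·d = (10c+37)·c and 2d/c − 4 is a nonnegative integer hold simultaneously if and only if (c,d) is one of: (1/2,1), (4,22), (15/2,120), (8,156), (19/2,418), (10,685), (21/2,1491). Moreover, in each case, setting s = 2d/c − 4, the pair (d−s−1, s) equals respectively (0,0), (14,7), (91,28), (120,35), (333,84), (551,133), (1210,280). -/
/-- Table 3.2: pairs `(c, d)` with `c` a positive half-integer and `d` a positive
integer such that `(22 - 2c)d = (10c + 37)c` and `s = 2d/c - 4` is a nonnegative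
integer; moreover the resulting values of `(d - s - 1, s)` in each case. -/
theorem table_3_2 (c : ℚ) (d : ℕ)
    (hc : ∃ n : ℤ, 0 < n ∧ 2 * c = n) (hd : 0 < d) :
    (((22 - 2*c) * (d : ℚ) = (10*c + 37) * c ∧ ∃ s : ℕ, (s : ℚ) = 2*(d : ℚ)/c - 4) ↔
      ((c = 1/2 ∧ d = 1) ∨ (c = 4 ∧ d = 22) ∨ (c = 15/2 ∧ d = 120) ∨ (c = 8 ∧ d = 156) ∨
       (c = 19/2 ∧ d = 418) ∨ (c = 10 ∧ d = 685) ∨ (c = 21/2 ∧ d = 1491)))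
    ∧ ((1 : ℚ) - (2*1/(1/2) - 4) - 1 = 0 ∧ 2*(1:ℚ)/(1/2) - 4 = 0)
    ∧ ((22 : ℚ) - (2*22/4 - 4) - 1 = 14 ∧ 2*(22:ℚ)/4 - 4 = 7)
    ∧ ((120 : ℚ) - (2*120/(15/2) - 4) - 1 = 91 ∧ 2*(120:ℚ)/(15/2) - 4 = 28)
    ∧ ((156 : ℚ) - (2*156/8 - 4) - 1 = 120 ∧ 2*(156:ℚ)/8 - 4 = 35)
    ∧ ((418 : ℚ) - (2*418/(19/2) - 4) - 1 = 333 ∧ 2*(418:ℚ)/(19/2) - 4 = 84)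
    ∧ ((685 : ℚ) - (2*685/10 - 4) - 1 = 551 ∧ 2*(685:ℚ)/10 - 4 = 133)
    ∧ ((1491 : ℚ) - (2*1491/(21/2) - 4) - 1 = 1210 ∧ 2*(1491:ℚ)/(21/2) - 4 = 280) := by
  refine ⟨?_, by norm_num, by norm_num, by norm_num, by norm_num, by norm_num, by norm_num, by norm_num⟩
  constructor
  · rintro ⟨h, s, hs⟩
    obtain ⟨n, hn, h2c⟩ := hc
    have hcq : c = (n : ℚ) / 2 := by
      rw [eq_div_iff (by norm_num : (2:ℚ) ≠ 0)]; linarith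
    subst hcq
    have key : 2 * (22 - n) * (d : ℤ) = (5 * n + 37) * n := by
      have h2 : (2 * (22 - (n:ℚ))) * (d:ℚ) = (5 * (n:ℚ) + 37) * n := by
        field_simp at h; ring_nf at h ⊢; linarith
      exact_mod_cast h2
    have hn21 : n ≤ 21 := by nlinarith [Int.ofNat_le.mpr hd.le]
    interval_cases n <;>
      first
        | omega
        | (norm_num; omega)
        | (exfalso
           have hd46 : d = 46 := by omega
           subst hd46
           have h11 : (11:ℚ) * (s:ℚ) = 140 := by
             rw [hs]; norm_num
           have : (11:ℤ) * (s:ℤ) = 140 := by exact_mod_cast h11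
           omega)
  · rintro (⟨rfl, rfl⟩ | ⟨rfl, rfl⟩ | ⟨rfl, rfl⟩ | ⟨rfl, rfl⟩ | ⟨rfl, rfl⟩ | ⟨rfl, rfl⟩ | ⟨rfl, rfl⟩)
    · exact ⟨by norm_num, 0, by norm_num⟩
    · exact ⟨by norm_num, 7, by norm_num⟩
    · exact ⟨by norm_num, 28, by norm_num⟩
    · exact ⟨by norm_num, 35, by norm_num⟩
    · exact ⟨by norm_num, 84, by norm_num⟩
    · exact ⟨by norm_num, 133, by norm_num⟩
    · exact ⟨by norm_num, 280, by norm_num⟩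
end

section
/- Let c and d be rational numbers with d ≥ 2. If both (22−2c)·d = (10c+37)·c and (3c²+164c−2992)·d = −c·(140c²+1903c+4832) hold, then c = 8 and d = 156. -/
/-- Arithmetic core of the Proposition in Section 3.2: the two constraints from an
idempotent of central charge 1/2 without 1/16-components force `c = 8`, `d = 156`. -/
theorem prop_3_2_arith (c d : ℚ) (hd : 2 ≤ d)
    (h1 : (22 - 2*c) * d = (10*c + 37) * c)
    (h2 : (3*c^2 + 164*c - 2992) * d = -c * (140*c^2 + 1903*c + 4832)) :
    c = 8 ∧ d = 156 := by
  have key : c * (c - 8) * (2*c - 1) * (5*c + 22) = 0 := by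
    linear_combination ((3*c^2 + 164*c - 2992)/25) * h1 - ((22 - 2*c)/25) * h2
  have hc : c = 8 := by
    rcases mul_eq_zero.mp key with h | h
    · rcases mul_eq_zero.mp h with h | h
      · rcases mul_eq_zero.mp h with h | h
        · exfalso; rw [h] at h1; simp at h1; linarith
        · linarith
      · exfalso
        have hc2 : c = 1/2 := by linarith
        rw [hc2] at h1; norm_num at h1; linarith
    · exfalso
      have hc2 : c = -22/5 := by linarith
      rw [hc2] at h1; norm_num at h1; linarith
  refine ⟨hc, ?_⟩
  rw [hc] at h1; norm_num at h1; linarith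
end

section
/- Let c be a rational number such that 2c is a positive integer and c ≠ 1/2, and let d be a positive integer with 2·(c²−55c+748)·d = (70c²+955c+2388)·c. Then there exist integers x ≥ 0 and y ≥ 1 with x/2 + y/16 + 2 = d/c, x/4 + y/256 + 4 = (−2(5c²−88d+2cd) + (5c+22d))/(4c(5c+22)), and d − x − y − 1 ≥ 0, if and only if c ∈ {16, 20, 47/2, 24, 49/2, 61/2, 63/2, 32, 36}; and in these cases the quadruple (d; d−x−y−1, x, y) is respectively (2296; 1116, 155, 1024), (10310; 4914, 403, 4992), (96256; 46851, 2300, 47104), (196884; 96256, 4371, 96256), (1107449; 543960, 22816, 540672), (1964871; 1029630, 13640, 921600), (207144; 109771, 1116, 96256), (139504; 74340, 651, 64512), (35856; 19951, 0, 15904). -/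
set_option maxHeartbeats 4000000 in
/-- Table 3.3: for a positive half-integer rank `c ≠ 1/2` and positive integer
dimension `d` satisfying the class-`S^6` constraint, the eigenspace dimensions
`x = d(1/2) ≥ 0`, `y = d(1/16) ≥ 1` with `d(0) = d - x - y - 1 ≥ 0` determined
by the trace formulae exist iff `c` is one of nine values, and in those cases the
quadruple `(d; d - x - y - 1, x, y)` is as listed. -/
theorem table_3_3 (c : ℚ) (d : ℕ)
    (hc : ∃ n : ℤ, 0 < n ∧ 2 * c = n) (hc' : c ≠ 1/2) (hd : 0 < d)
    (hcd : 2 * (c^2 - 55*c + 748) * (d : ℚ) = (70*c^2 + 955*c + 2388) * c) :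
    ((∃ x y : ℤ, 0 ≤ x ∧ 1 ≤ y ∧
        (x : ℚ)/2 + (y : ℚ)/16 + 2 = (d : ℚ)/c ∧
        (x : ℚ)/4 + (y : ℚ)/256 + 4
          = (-2*(5*c^2 - 88*(d:ℚ) + 2*c*(d:ℚ)) + (5*c + 22*(d:ℚ))) / (4*c*(5*c + 22)) ∧
        0 ≤ (d : ℤ) - x - y - 1) ↔
      (c = 16 ∨ c = 20 ∨ c = 47/2 ∨ c = 24 ∨ c = 49/2 ∨ c = 61/2 ∨ c = 63/2 ∨
        c = 32 ∨ c = 36))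
    ∧ (∀ x y : ℤ, 0 ≤ x → 1 ≤ y →
        (x : ℚ)/2 + (y : ℚ)/16 + 2 = (d : ℚ)/c →
        (x : ℚ)/4 + (y : ℚ)/256 + 4
          = (-2*(5*c^2 - 88*(d:ℚ) + 2*c*(d:ℚ)) + (5*c + 22*(d:ℚ))) / (4*c*(5*c + 22)) →
        0 ≤ (d : ℤ) - x - y - 1 →
        ((c = 16 → d = 2296 ∧ (d:ℤ) - x - y - 1 = 1116 ∧ x = 155 ∧ y = 1024) ∧
         (c = 20 → d = 10310 ∧ (d:ℤ) - x - y - 1 = 4914 ∧ x = 403 ∧ y = 4992) ∧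
         (c = 47/2 → d = 96256 ∧ (d:ℤ) - x - y - 1 = 46851 ∧ x = 2300 ∧ y = 47104) ∧
         (c = 24 → d = 196884 ∧ (d:ℤ) - x - y - 1 = 96256 ∧ x = 4371 ∧ y = 96256) ∧
         (c = 49/2 → d = 1107449 ∧ (d:ℤ) - x - y - 1 = 543960 ∧ x = 22816 ∧ y = 540672) ∧
         (c = 61/2 → d = 1964871 ∧ (d:ℤ) - x - y - 1 = 1029630 ∧ x = 13640 ∧ y = 921600) ∧
         (c = 63/2 → d = 207144 ∧ (d:ℤ) - x - y - 1 = 109771 ∧ x = 1116 ∧ y = 96256) ∧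
         (c = 32 → d = 139504 ∧ (d:ℤ) - x - y - 1 = 74340 ∧ x = 651 ∧ y = 64512) ∧
         (c = 36 → d = 35856 ∧ (d:ℤ) - x - y - 1 = 19951 ∧ x = 0 ∧ y = 15904))) := by
  obtain ⟨n, hn, hcn⟩ := hc
  have hcval : c = (n:ℚ)/2 := by linarith
  subst hcval
  have hn2 : 2 ≤ n := by
    by_contra hlt
    push_neg at hlt
    interval_cases n
    exact hc' (by norm_num)
  have hZ : (2*n^2 - 220*n + 5984) * (d:ℤ) = n*(35*n^2+955*n+4776) := by
    have h : ((2*n^2 - 220*n + 5984 : ℤ):ℚ) * (d:ℚ) = ((n*(35*n^2+955*n+4776) : ℤ):ℚ) := by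
      push_cast
      linear_combination 4 * hcd
    exact_mod_cast h
  constructor
  · constructor
    · rintro ⟨x, y, hx, hy, e1, e2, hxy⟩
      have hn0 : (n:ℚ) ≠ 0 := by
        have : (0:ℚ) < (n:ℚ) := by exact_mod_cast hn
        exact this.ne'
      have hnpos : (0:ℚ) < (n:ℚ) := by exact_mod_cast hn
      have hn44 : 5*(n:ℚ) + 44 ≠ 0 := by positivity
      have E1 : 8*(n:ℚ)*x + (n:ℚ)*y + 32*(n:ℚ) = 32*(d:ℚ) := by
        field_simp at e1; linarith
      have E2 : 64*(n:ℚ)*(5*(n:ℚ)+44)*x + (n:ℚ)*(5*(n:ℚ)+44)*y + 1024*(n:ℚ)*(5*(n:ℚ)+44)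
          = -640*(n:ℚ)^2 + 640*(n:ℚ) + 50688*(d:ℚ) - 512*(n:ℚ)*(d:ℚ) := by
        field_simp at e2; linarith
      have E3 : (2*(n:ℚ)^2 - 220*(n:ℚ) + 5984) * (d:ℚ)
          = 35*(n:ℚ)^3 + 955*(n:ℚ)^2 + 4776*(n:ℚ) := by linear_combination 4 * hcd
      have G : (112*(n:ℚ)*(5*(n:ℚ)+44)) * (((n:ℚ)^2 - 110*(n:ℚ) + 2992) * x)
          = (112*(n:ℚ)*(5*(n:ℚ)+44)) * (-62*((n:ℚ)-1)*((n:ℚ)-72)) := by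
        linear_combination (2*((n:ℚ)^2 - 110*(n:ℚ) + 2992))*E2
          - (2*((n:ℚ)^2 - 110*(n:ℚ) + 2992))*(5*(n:ℚ)+44)*E1 + (49280 - 672*(n:ℚ))*E3
      have h112 : (112*(n:ℚ)*(5*(n:ℚ)+44)) ≠ 0 := by positivity
      have hP : ((n:ℚ)^2 - 110*(n:ℚ) + 2992) * x = -62*((n:ℚ)-1)*((n:ℚ)-72) :=
        mul_left_cancel₀ h112 G
      have h72 : n ≤ 72 := by
        by_contra hgt
        push_neg at hgt
        have hN : (73:ℚ) ≤ (n:ℚ) := by exact_mod_cast hgt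
        have hxq : (0:ℚ) ≤ (x:ℚ) := by exact_mod_cast hx
        nlinarith [mul_nonneg (by nlinarith : (0:ℚ) ≤ (n:ℚ)^2 - 110*(n:ℚ) + 2992) hxq,
          mul_pos (by linarith : (0:ℚ) < (n:ℚ)-1) (by linarith : (0:ℚ) < (n:ℚ)-72)]
      interval_cases n
      · omega
      · omega
      · omega
      · omega
      · omega
      · omega
      · omega
      · omega
      · omega
      · omega
      · omega
      · omega
      · omega
      · omega
      · exfalso
        have hd' : d = 156 := by omega
        subst hd'
        norm_num at e1 e2
        have h0 : (y:ℚ) = 0 := by linarith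
        have h1 : y = 0 := by exact_mod_cast h0
        omega
      · omega
      · omega
      · omega
      · omega
      · omega
      · omega
      · omega
      · omega
      · omega
      · omega
      · omega
      · omega
      · omega
      · omega
      · omega
      · norm_num
      · omega
      · omega
      · omega
      · omega
      · omega
      · omega
      · omega
      · norm_num
      · omega
      · omega
      · exfalso
        have hd' : d = 21414 := by omega
        subst hd'
        norm_num at e1 e2
        have h0 : (37:ℚ) * x = 25172 := by linarith
        have h1 : (37:ℤ) * x = 25172 := by exact_mod_cast h0
        omega
      · exfalso
        have hd' : d = 28639 := by omega
        subst hd'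
        norm_num at e1 e2
        have h0 : (11:ℚ) * x = 9331 := by linarith
        have h1 : (11:ℤ) * x = 9331 := by exact_mod_cast h0
        omega
      · omega
      · omega
      · norm_num
      · norm_num
      · norm_num
      · omega
      · omega
      · omega
      · omega
      · omega
      · omega
      · omega
      · omega
      · omega
      · omega
      · omega
      · norm_num
      · omega
      · norm_num
      · norm_num
      · omega
      · omega
      · omega
      · exfalso
        have hd' : d = 57889 := by omega
        subst hd'
        norm_num at e1 e2
        have h0 : (17:ℚ) * x = 2077 := by linarith
        have h1 : (17:ℤ) * x = 2077 := by exact_mod_cast h0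
        omega
      · omega
      · omega
      · omega
      · norm_num
    · intro hcase
      have hncase : n = 32 ∨ n = 40 ∨ n = 47 ∨ n = 48 ∨ n = 49 ∨ n = 61 ∨ n = 63 ∨
          n = 64 ∨ n = 72 := by
        rcases hcase with h|h|h|h|h|h|h|h|h
        · have hq : (n:ℚ) = 32 := by linarith
          have h' : n = 32 := by exact_mod_cast hq
          omega
        · have hq : (n:ℚ) = 40 := by linarith
          have h' : n = 40 := by exact_mod_cast hq
          omega
        · have hq : (n:ℚ) = 47 := by linarith
          have h' : n = 47 := by exact_mod_cast hq
          omega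
        · have hq : (n:ℚ) = 48 := by linarith
          have h' : n = 48 := by exact_mod_cast hq
          omega
        · have hq : (n:ℚ) = 49 := by linarith
          have h' : n = 49 := by exact_mod_cast hq
          omega
        · have hq : (n:ℚ) = 61 := by linarith
          have h' : n = 61 := by exact_mod_cast hq
          omega
        · have hq : (n:ℚ) = 63 := by linarith
          have h' : n = 63 := by exact_mod_cast hq
          omega
        · have hq : (n:ℚ) = 64 := by linarith
          have h' : n = 64 := by exact_mod_cast hq
          omega
        · have hq : (n:ℚ) = 72 := by linarith
          have h' : n = 72 := by exact_mod_cast hq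
          omega
      rcases hncase with h|h|h|h|h|h|h|h|h <;> subst h
      · have hd' : d = 2296 := by omega
        subst hd'
        exact ⟨155, 1024, by norm_num, by norm_num, by norm_num, by norm_num, by norm_num⟩
      · have hd' : d = 10310 := by omega
        subst hd'
        exact ⟨403, 4992, by norm_num, by norm_num, by norm_num, by norm_num, by norm_num⟩
      · have hd' : d = 96256 := by omega
        subst hd'
        exact ⟨2300, 47104, by norm_num, by norm_num, by norm_num, by norm_num, by norm_num⟩
      · have hd' : d = 196884 := by omega
        subst hd'
        exact ⟨4371, 96256, by norm_num, by norm_num, by norm_num, by norm_num, by norm_num⟩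
      · have hd' : d = 1107449 := by omega
        subst hd'
        exact ⟨22816, 540672, by norm_num, by norm_num, by norm_num, by norm_num, by norm_num⟩
      · have hd' : d = 1964871 := by omega
        subst hd'
        exact ⟨13640, 921600, by norm_num, by norm_num, by norm_num, by norm_num, by norm_num⟩
      · have hd' : d = 207144 := by omega
        subst hd'
        exact ⟨1116, 96256, by norm_num, by norm_num, by norm_num, by norm_num, by norm_num⟩
      · have hd' : d = 139504 := by omega
        subst hd'
        exact ⟨651, 64512, by norm_num, by norm_num, by norm_num, by norm_num, by norm_num⟩
      · have hd' : d = 35856 := by omega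
        subst hd'
        exact ⟨0, 15904, by norm_num, by norm_num, by norm_num, by norm_num, by norm_num⟩
  · intro x y hx hy e1 e2 hxy
    refine ⟨?_, ?_, ?_, ?_, ?_, ?_, ?_, ?_, ?_⟩
    · intro h
      have h' : n = 32 := by
        have hq : (n:ℚ) = 32 := by linarith
        exact_mod_cast hq
      subst h'
      have hd' : d = 2296 := by omega
      subst hd'
      norm_num at e1 e2
      have hxq : (x:ℚ) = 155 := by linarith
      have hyq : (y:ℚ) = 1024 := by linarith
      have hx' : x = 155 := by exact_mod_cast hxq
      have hy' : y = 1024 := by exact_mod_cast hyq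
      subst hx' hy'
      norm_num
    · intro h
      have h' : n = 40 := by
        have hq : (n:ℚ) = 40 := by linarith
        exact_mod_cast hq
      subst h'
      have hd' : d = 10310 := by omega
      subst hd'
      norm_num at e1 e2
      have hxq : (x:ℚ) = 403 := by linarith
      have hyq : (y:ℚ) = 4992 := by linarith
      have hx' : x = 403 := by exact_mod_cast hxq
      have hy' : y = 4992 := by exact_mod_cast hyq
      subst hx' hy'
      norm_num
    · intro h
      have h' : n = 47 := by
        have hq : (n:ℚ) = 47 := by linarith
        exact_mod_cast hq
      subst h'
      have hd' : d = 96256 := by omega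
      subst hd'
      norm_num at e1 e2
      have hxq : (x:ℚ) = 2300 := by linarith
      have hyq : (y:ℚ) = 47104 := by linarith
      have hx' : x = 2300 := by exact_mod_cast hxq
      have hy' : y = 47104 := by exact_mod_cast hyq
      subst hx' hy'
      norm_num
    · intro h
      have h' : n = 48 := by
        have hq : (n:ℚ) = 48 := by linarith
        exact_mod_cast hq
      subst h'
      have hd' : d = 196884 := by omega
      subst hd'
      norm_num at e1 e2
      have hxq : (x:ℚ) = 4371 := by linarith
      have hyq : (y:ℚ) = 96256 := by linarith
      have hx' : x = 4371 := by exact_mod_cast hxq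
      have hy' : y = 96256 := by exact_mod_cast hyq
      subst hx' hy'
      norm_num
    · intro h
      have h' : n = 49 := by
        have hq : (n:ℚ) = 49 := by linarith
        exact_mod_cast hq
      subst h'
      have hd' : d = 1107449 := by omega
      subst hd'
      norm_num at e1 e2
      have hxq : (x:ℚ) = 22816 := by linarith
      have hyq : (y:ℚ) = 540672 := by linarith
      have hx' : x = 22816 := by exact_mod_cast hxq
      have hy' : y = 540672 := by exact_mod_cast hyq
      subst hx' hy'
      norm_num
    · intro h
      have h' : n = 61 := by
        have hq : (n:ℚ) = 61 := by linarith
        exact_mod_cast hq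
      subst h'
      have hd' : d = 1964871 := by omega
      subst hd'
      norm_num at e1 e2
      have hxq : (x:ℚ) = 13640 := by linarith
      have hyq : (y:ℚ) = 921600 := by linarith
      have hx' : x = 13640 := by exact_mod_cast hxq
      have hy' : y = 921600 := by exact_mod_cast hyq
      subst hx' hy'
      norm_num
    · intro h
      have h' : n = 63 := by
        have hq : (n:ℚ) = 63 := by linarith
        exact_mod_cast hq
      subst h'
      have hd' : d = 207144 := by omega
      subst hd'
      norm_num at e1 e2
      have hxq : (x:ℚ) = 1116 := by linarith
      have hyq : (y:ℚ) = 96256 := by linarith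
      have hx' : x = 1116 := by exact_mod_cast hxq
      have hy' : y = 96256 := by exact_mod_cast hyq
      subst hx' hy'
      norm_num
    · intro h
      have h' : n = 64 := by
        have hq : (n:ℚ) = 64 := by linarith
        exact_mod_cast hq
      subst h'
      have hd' : d = 139504 := by omega
      subst hd'
      norm_num at e1 e2
      have hxq : (x:ℚ) = 651 := by linarith
      have hyq : (y:ℚ) = 64512 := by linarith
      have hx' : x = 651 := by exact_mod_cast hxq
      have hy' : y = 64512 := by exact_mod_cast hyq
      subst hx' hy'
      norm_num
    · intro h
      have h' : n = 72 := by
        have hq : (n:ℚ) = 72 := by linarith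
        exact_mod_cast hq
      subst h'
      have hd' : d = 35856 := by omega
      subst hd'
      norm_num at e1 e2
      have hxq : (x:ℚ) = 0 := by linarith
      have hyq : (y:ℚ) = 15904 := by linarith
      have hx' : x = 0 := by exact_mod_cast hxq
      have hy' : y = 15904 := by exact_mod_cast hyq
      subst hx' hy'
      norm_num
end

section
/- Let S = {0, 1/2, 1/16}. There is a unique function m : S × S → ℚ with m(h,h') = m(h',h) for all h, h' ∈ S, satisfying the six equations (all sums over ordered pairs (h,h') ∈ S × S): Σ m(h,h') + 2 = 196884; Σ h·m(h,h') + 2 = 16407/2; Σ h²·m(h,h') + 4 = 5891/4; Σ h·h'·m(h,h') = 1271/4; Σ h²·h'·m(h,h') = 403/8; Σ h²·h'²·m(h,h') = 197/32. It is given by m(0,0) = 46851, m(0,1/16) = m(1/16,0) = m(1/16,1/16) = 47104, m(0,1/2) = m(1/2,0) = 2300, m(1/16,1/2) = m(1/2,1/16) = 2048, m(1/2,1/2) = 23. Moreover 46851 − 47104 − 47104 + 47104 + 2300 + 2300 − 2048 − 2048 + 23 + 2 = 276. -/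
private lemma sum3 (f : ℚ → ℚ) :
    ∑ h ∈ ({0, 1/2, 1/16} : Finset ℚ), f h = f 0 + f (1/2) + f (1/16) := by
  rw [show ({0, 1/2, 1/16} : Finset ℚ) = insert 0 (insert (1/2) {1/16}) from rfl,
    Finset.sum_insert (by norm_num), Finset.sum_insert (by norm_num),
    Finset.sum_singleton]
  ring


/-- Simultaneous eigenspace dimensions `m(h,h')` for two orthogonal idempotents of
central charge 1/2: there is a unique symmetric function on `{0, 1/2, 1/16}²`
satisfying the six trace equations, with the listed values; the trace of the
product of the two 2A involutions is 276 (a 2B involution). -/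
theorem eigenspaces_2B :
    (∀ m : ℚ → ℚ → ℚ,
      ((∀ h ∈ ({0, 1/2, 1/16} : Finset ℚ), ∀ h' ∈ ({0, 1/2, 1/16} : Finset ℚ),
          m h h' = m h' h) ∧
       (∑ h ∈ ({0, 1/2, 1/16} : Finset ℚ), ∑ h' ∈ ({0, 1/2, 1/16} : Finset ℚ),
          m h h') + 2 = 196884 ∧
       (∑ h ∈ ({0, 1/2, 1/16} : Finset ℚ), ∑ h' ∈ ({0, 1/2, 1/16} : Finset ℚ),
          h * m h h') + 2 = 16407/2 ∧
       (∑ h ∈ ({0, 1/2, 1/16} : Finset ℚ), ∑ h' ∈ ({0, 1/2, 1/16} : Finset ℚ),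
          h^2 * m h h') + 4 = 5891/4 ∧
       (∑ h ∈ ({0, 1/2, 1/16} : Finset ℚ), ∑ h' ∈ ({0, 1/2, 1/16} : Finset ℚ),
          h * h' * m h h') = 1271/4 ∧
       (∑ h ∈ ({0, 1/2, 1/16} : Finset ℚ), ∑ h' ∈ ({0, 1/2, 1/16} : Finset ℚ),
          h^2 * h' * m h h') = 403/8 ∧
       (∑ h ∈ ({0, 1/2, 1/16} : Finset ℚ), ∑ h' ∈ ({0, 1/2, 1/16} : Finset ℚ),
          h^2 * h'^2 * m h h') = 197/32) ↔
      (m 0 0 = 46851 ∧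
       m 0 (1/16) = 47104 ∧ m (1/16) 0 = 47104 ∧ m (1/16) (1/16) = 47104 ∧
       m 0 (1/2) = 2300 ∧ m (1/2) 0 = 2300 ∧
       m (1/16) (1/2) = 2048 ∧ m (1/2) (1/16) = 2048 ∧
       m (1/2) (1/2) = 23))
    ∧ (46851 - 47104 - 47104 + 47104 + 2300 + 2300 - 2048 - 2048 + 23 + 2 : ℤ) = 276 := by
  constructor
  · intro m
    constructor
    · rintro ⟨hsym, h1, h2, h3, h4, h5, h6⟩
      have s1 := hsym (1/2) (by norm_num) (1/16) (by norm_num)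
      have s2 := hsym 0 (by norm_num) (1/16) (by norm_num)
      have s3 := hsym 0 (by norm_num) (1/2) (by norm_num)
      simp only [sum3] at h1 h2 h3 h4 h5 h6
      norm_num at h1 h2 h3 h4 h5 h6
      refine ⟨?_, ?_, ?_, ?_, ?_, ?_, ?_, ?_, ?_⟩ <;> linarith
    · rintro ⟨e1, e2, e3, e4, e5, e6, e7, e8, e9⟩
      refine ⟨?_, ?_, ?_, ?_, ?_, ?_, ?_⟩
      · intro h hh h' hh'
        simp only [Finset.mem_insert, Finset.mem_singleton] at hh hh'
        rcases hh with rfl | rfl | rfl <;> rcases hh' with rfl | rfl | rfl <;>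
          norm_num [e1, e2, e3, e4, e5, e6, e7, e8, e9]
      all_goals
        simp only [sum3]
        norm_num [e1, e2, e3, e4, e5, e6, e7, e8, e9]
  · norm_num
end

section
/- Define the polynomials P₁(t) = 32814t, P₂(t) = 4620t + 5084t², P₃(t) = 1800t + 1860t² + 744t³, P₄(t) = 864t + 1068t² + 480t³ + 104t⁴, P₅(t) = 480t + 680t² + 370t³ + 100t⁴ + 14t⁵. The system of six linear equations in the six unknowns x_h indexed by h ∈ {0, 3/80, 1/10, 7/16, 3/5, 3/2}, namely Σ_h x_h + 1 = 196884 and Σ_h x_h·h^k + 2^k = P_k(7/20) for k = 1, …, 5, has a unique solution in rational numbers: x₀ = 51054, x_{3/80} = 91392, x_{1/10} = 47634, x_{7/16} = 4864, x_{3/5} = 1938, x_{3/2} = 1. Moreover 51054 − 91392 + 47634 − 4864 + 1938 + 1 + 1 = 4372. -/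
/-- Norton trace polynomials: `Tr R_e^k = P_k((e|e))` for an idempotent `e` of
the Conway–Griess algebra. -/
def P₁ (t : ℚ) : ℚ := 32814*t
def P₂ (t : ℚ) : ℚ := 4620*t + 5084*t^2
def P₃ (t : ℚ) : ℚ := 1800*t + 1860*t^2 + 744*t^3
def P₄ (t : ℚ) : ℚ := 864*t + 1068*t^2 + 480*t^3 + 104*t^4
def P₅ (t : ℚ) : ℚ := 480*t + 680*t^2 + 370*t^3 + 100*t^4 + 14*t^5

/-- Eigenspace computation for an idempotent of central charge 7/10 coming from
`L(7/10, 0)`: the six trace equations determine the six eigenspace dimensions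
uniquely, and the associated involution has trace 4372 (a 2A involution). -/
theorem eigenspaces_L7_10 :
    (∀ x₀ x₁ x₂ x₃ x₄ x₅ : ℚ,
      (x₀ + x₁ + x₂ + x₃ + x₄ + x₅ + 1 = 196884 ∧
       x₀*0 + x₁*(3/80) + x₂*(1/10) + x₃*(7/16) + x₄*(3/5) + x₅*(3/2) + 2
         = P₁ (7/20) ∧
       x₀*0^2 + x₁*(3/80)^2 + x₂*(1/10)^2 + x₃*(7/16)^2 + x₄*(3/5)^2 + x₅*(3/2)^2 + 2^2
         = P₂ (7/20) ∧
       x₀*0^3 + x₁*(3/80)^3 + x₂*(1/10)^3 + x₃*(7/16)^3 + x₄*(3/5)^3 + x₅*(3/2)^3 + 2^3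
         = P₃ (7/20) ∧
       x₀*0^4 + x₁*(3/80)^4 + x₂*(1/10)^4 + x₃*(7/16)^4 + x₄*(3/5)^4 + x₅*(3/2)^4 + 2^4
         = P₄ (7/20) ∧
       x₀*0^5 + x₁*(3/80)^5 + x₂*(1/10)^5 + x₃*(7/16)^5 + x₄*(3/5)^5 + x₅*(3/2)^5 + 2^5
         = P₅ (7/20)) ↔
      (x₀ = 51054 ∧ x₁ = 91392 ∧ x₂ = 47634 ∧ x₃ = 4864 ∧ x₄ = 1938 ∧ x₅ = 1))
    ∧ (51054 - 91392 + 47634 - 4864 + 1938 + 1 + 1 : ℤ) = 4372 := by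
  refine ⟨fun x₀ x₁ x₂ x₃ x₄ x₅ => ⟨fun ⟨h0,h1,h2,h3,h4,h5⟩ => ?_, fun ⟨h0,h1,h2,h3,h4,h5⟩ => ?_⟩, by norm_num⟩
  · simp only [P₁,P₂,P₃,P₄,P₅] at h1 h2 h3 h4 h5
    refine ⟨by linarith, by linarith, by linarith, by linarith, by linarith, by linarith⟩
  · subst h0 h1 h2 h3 h4 h5
    refine ⟨by norm_num, ?_, ?_, ?_, ?_, ?_⟩ <;> simp only [P₁,P₂,P₃,P₄,P₅] <;> norm_num
end

section
/- Define the polynomials P₁(t) = 32814t, P₂(t) = 4620t + 5084t², P₃(t) = 1800t + 1860t² + 744t³. The system of four linear equations in the four unknowns x_h indexed by h ∈ {0, 1/15, 2/5, 2/3}, namely Σ_h x_h + 1 = 196884 and Σ_h x_h·h^k + 2^k = P_k(2/5) for k = 1, 2, 3, has a unique solution in rational numbers: x₀ = 57478, x_{1/15} = 129168, x_{2/5} = 8671, x_{2/3} = 1566. Moreover 57478 + 8671 + 1 − (129168 + 1566)/2 = 783. -/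
/-- Eigenspace computation for the idempotent of the `W₃` algebra at `c = 4/5`:
the four trace equations determine the four eigenspace dimensions uniquely, and
the associated order-3 automorphism has trace 783 (a 3A element). -/
theorem eigenspaces_W3 :
    (∀ x₀ x₁ x₂ x₃ : ℚ,
      (x₀ + x₁ + x₂ + x₃ + 1 = 196884 ∧
       x₀*0 + x₁*(1/15) + x₂*(2/5) + x₃*(2/3) + 2 = P₁ (2/5) ∧
       x₀*0^2 + x₁*(1/15)^2 + x₂*(2/5)^2 + x₃*(2/3)^2 + 2^2 = P₂ (2/5) ∧
       x₀*0^3 + x₁*(1/15)^3 + x₂*(2/5)^3 + x₃*(2/3)^3 + 2^3 = P₃ (2/5)) ↔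
      (x₀ = 57478 ∧ x₁ = 129168 ∧ x₂ = 8671 ∧ x₃ = 1566))
    ∧ (57478 + 8671 + 1 - (129168 + 1566)/2 : ℚ) = 783 := by
  constructor
  · intro x₀ x₁ x₂ x₃
    constructor
    · rintro ⟨h1, h2, h3, h4⟩
      simp only [P₁, P₂, P₃] at h2 h3 h4
      refine ⟨?_, ?_, ?_, ?_⟩ <;> linarith
    · rintro ⟨h1, h2, h3, h4⟩
      subst h1 h2 h3 h4
      norm_num [P₁, P₂, P₃]
  · norm_num
end

section
/- Define the polynomials P₁(t) = 32814t, P₂(t) = 4620t + 5084t², P₃(t) = 1800t + 1860t² + 744t³, P₄(t) = 864t + 1068t² + 480t³ + 104t⁴, P₅(t) = 480t + 680t² + 370t³ + 100t⁴ + 14t⁵. There is exactly one 7-tuple of nonnegative integers (x_h), indexed by h ∈ {0, 1/16, 1/12, 1/3, 9/16, 3/4, 1}, satisfying the six equations Σ_h x_h + 1 = 196884 and Σ_h x_h·h^k + 2^k = P_k(1/2) for k = 1, …, 5; it is x₀ = 38226, x_{1/16} = 94208, x_{1/12} = 48600, x_{1/3} = 11178, x_{9/16} = 4096, x_{3/4}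 = 552, x₁ = 23. Moreover 38226 − 48600 + 11178 − 552 + 23 + 1 = 276 and 38226 + 48600 + 11178 + 552 + 23 + 1 − 94208 − 4096 = 276. -/
set_option maxHeartbeats 4000000 in
/-- Eigenspace computation for the idempotent of the `W₄` algebra at `c = 1`:
there is exactly one 7-tuple of nonnegative integers satisfying the six trace
equations, and the associated order-4 automorphism has trace 276 (a 4A element),
as does its square (a 2B involution). -/
theorem eigenspaces_W4 :
    (∀ x₀ x₁ x₂ x₃ x₄ x₅ x₆ : ℕ,
      ((x₀:ℚ) + x₁ + x₂ + x₃ + x₄ + x₅ + x₆ + 1 = 196884 ∧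
       (x₀:ℚ)*0 + x₁*(1/16) + x₂*(1/12) + x₃*(1/3) + x₄*(9/16) + x₅*(3/4) + x₆*1 + 2
         = P₁ (1/2) ∧
       (x₀:ℚ)*0^2 + x₁*(1/16)^2 + x₂*(1/12)^2 + x₃*(1/3)^2 + x₄*(9/16)^2 + x₅*(3/4)^2
         + x₆*1^2 + 2^2 = P₂ (1/2) ∧
       (x₀:ℚ)*0^3 + x₁*(1/16)^3 + x₂*(1/12)^3 + x₃*(1/3)^3 + x₄*(9/16)^3 + x₅*(3/4)^3
         + x₆*1^3 + 2^3 = P₃ (1/2) ∧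
       (x₀:ℚ)*0^4 + x₁*(1/16)^4 + x₂*(1/12)^4 + x₃*(1/3)^4 + x₄*(9/16)^4 + x₅*(3/4)^4
         + x₆*1^4 + 2^4 = P₄ (1/2) ∧
       (x₀:ℚ)*0^5 + x₁*(1/16)^5 + x₂*(1/12)^5 + x₃*(1/3)^5 + x₄*(9/16)^5 + x₅*(3/4)^5
         + x₆*1^5 + 2^5 = P₅ (1/2)) ↔
      (x₀ = 38226 ∧ x₁ = 94208 ∧ x₂ = 48600 ∧ x₃ = 11178 ∧ x₄ = 4096 ∧ x₅ = 552 ∧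
        x₆ = 23))
    ∧ (38226 - 48600 + 11178 - 552 + 23 + 1 : ℤ) = 276
    ∧ (38226 + 48600 + 11178 + 552 + 23 + 1 - 94208 - 4096 : ℤ) = 276 := by
  refine ⟨fun x₀ x₁ x₂ x₃ x₄ x₅ x₆ => ⟨fun ⟨h0,h1,h2,h3,h4,h5⟩ => ?_, ?_⟩, by norm_num, by norm_num⟩
  · simp only [P₁, P₂, P₃, P₄, P₅] at h1 h2 h3 h4 h5
    have e0 : x₀+x₁+x₂+x₃+x₄+x₅+x₆+1 = 196884 := by exact_mod_cast h0
    have a2 : 5888*x₂ + 5265*x₁ = 782161920 := by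
      have : 5888*(x₂:ℚ) + 5265*(x₁:ℚ) = 782161920 := by
        linear_combination (1492992/11)*h1 - (10616832/11)*h2 + (26597376/11)*h3
          - (28090368/11)*h4 + (10616832/11)*h5
      exact_mod_cast this
    have a3 : 1024*x₃ = 3815424 + 81*x₁ := by
      have : 1024*(x₃:ℚ) = 3815424 + 81*(x₁:ℚ) := by
        linear_combination (-373248/55)*h1 + (1202688/11)*h2 - (4091904/11)*h3
          + (5087232/11)*h4 - (10616832/55)*h5
      exact_mod_cast this
    have a4 : 1449*x₄ + 65*x₁ = 12058624 := by
      have : 1449*(x₄:ℚ) + 65*(x₁:ℚ) = 12058624 := by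
        linear_combination (65536/11)*h1 - (3407872/33)*h2 + (14221312/33)*h3
          - (6815744/11)*h4 + (3145728/11)*h5
      exact_mod_cast this
    have a5 : 768*x₅ + 800768 = 13*x₁ := by
      have : 768*(x₅:ℚ) + 800768 = 13*(x₁:ℚ) := by
        linear_combination (-6144/5)*h1 + (65536/3)*h2 - (292864/3)*h3
          + 155648*h4 - (393216/5)*h5
      exact_mod_cast this
    have a6 : 7168*x₆ + 13*x₁ = 1389568 := by
      have : 7168*(x₆:ℚ) + 13*(x₁:ℚ) = 1389568 := by
        linear_combination (13824/11)*h1 - (250368/11)*h2 + (1175552/11)*h3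
          - (2039808/11)*h4 + (1179648/11)*h5
      exact_mod_cast this
    clear h0 h1 h2 h3 h4 h5
    have d1 : x₁ % 5888 = 0 := by clear e0 a3 a4 a5 a6; omega
    have d2 : x₁ % 1024 = 0 := by clear e0 a2 a4 a5 a6; omega
    obtain ⟨m, rfl⟩ : ∃ m, x₁ = 23552 * m := ⟨x₁ / 23552, by clear e0 a2 a3 a4 a5 a6; omega⟩
    have hm : m = 4 := by
      clear e0 a2 a3 a4 d1 d2
      have hb1 : m ≤ 4 := by clear a5; omega
      have hb2 : 3 ≤ m := by clear a6; omega
      interval_cases m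
      · omega
      · omega
    subst hm
    clear d1 d2
    refine ⟨by omega, by omega, by clear e0 a3 a4 a5 a6; omega, by clear e0 a2 a4 a5 a6; omega,
      by clear e0 a2 a3 a5 a6; omega, by clear e0 a2 a3 a4 a6; omega,
      by clear e0 a2 a3 a4 a5; omega⟩
  · rintro ⟨rfl,rfl,rfl,rfl,rfl,rfl,rfl⟩
    refine ⟨by norm_num, ?_, ?_, ?_, ?_, ?_⟩ <;> simp only [P₁, P₂, P₃, P₄, P₅] <;> norm_num
end
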